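/- arXiv:1104.3918 — 2 statements merged into one kernel-verified Lean document; each statement's English description precedes it below -/
import Mathlib

section
/- Pieri rules for nonsymmetric q-Hermite polynomials: X^{-1}·Ē_{−n} = Ē_{−n−1} − Ē_{n+1} for all n ≥ 0; X^{-1}·Ē_n = (1 − q^{n−1})·Ē_{n−1} + q^{n−1}·Ē_{1−n} for all n ≥ 1; X·Ē_{−n} = (1 − qⁿ)·Ē_{1−n} + Ē_{n+1} for all n ≥ 0; and X·Ē_n = Ē_{n+1} − qⁿ·Ē_{1−n} for all n ≥ 1. -/
/-!
Nonsymmetric continuous q-Hermite polynomials of type A₁ (the `t → 0` and `t → ∞`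
limits of the nonsymmetric Macdonald polynomials), as Laurent polynomials over
`K = ℚ(u)` with `q = u⁴`.
-/

noncomputable section

open LaurentPolynomial

/-- The ground field `K = ℚ(u)`. -/
abbrev K : Type := RatFunc ℚ

/-- `u`, with `q = u⁴` (so `u = q^{1/4}`). -/
def u : K := RatFunc.X

/-- `q = u⁴`. -/
def q : K := u ^ 4

/-- The ring of Laurent polynomials `K[X, X⁻¹]`. -/
abbrev L : Type := LaurentPolynomial K

/-- `∏_{i=0}^{j-1}(1-q^{n-i-1})/(1-q^{1+i})`. -/
def hermProdPos (n j : ℕ) : K :=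
  ∏ i ∈ Finset.range j, (1 - q ^ ((n : ℤ) - i - 1)) / (1 - q ^ ((i : ℤ) + 1))

/-- `∏_{i=0}^{j-1}(1-q^{n-i})/(1-q^{1+i})`. -/
def hermProdNeg (n j : ℕ) : K :=
  ∏ i ∈ Finset.range j, (1 - q ^ ((n : ℤ) - i)) / (1 - q ^ ((i : ℤ) + 1))

/-- `Ē_n` for `n ≥ 1`. -/
def EHpos (n : ℕ) : L :=
  T (n : ℤ)
    + ∑ j ∈ Finset.Icc 1 (n / 2),
        (q ^ ((n : ℤ) - j) * (1 - q ^ (j : ℤ)) / (1 - q ^ ((n : ℤ) - j)) * hermProdPos n j) •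
          T (2 * (j : ℤ) - n)
    + ∑ j ∈ Finset.Icc 1 ((n - 1) / 2),
        (q ^ (j : ℤ) * hermProdPos n j) • T ((n : ℤ) - 2 * j)

/-- `Ē_{-n}` for `n ≥ 1`. -/
def EHneg (n : ℕ) : L :=
  T (-(n : ℤ)) + T (n : ℤ)
    + ∑ j ∈ Finset.Icc 1 (n / 2), hermProdNeg n j • T (2 * (j : ℤ) - n)
    + ∑ j ∈ Finset.Icc 1 ((n - 1) / 2), hermProdNeg n j • T ((n : ℤ) - 2 * j)

/-- The nonsymmetric continuous q-Hermite polynomials `Ē_n`, `n ∈ ℤ`. -/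
def EH : ℤ → L := fun n => if 0 < n then EHpos n.toNat else if n = 0 then 1 else EHneg (-n).toNat

/-- `Ē†_n` for `n ≥ 1`. -/
def EHdagPos (n : ℕ) : L :=
  T (n : ℤ)
    + ∑ j ∈ Finset.Icc 1 (n / 2),
        (q ^ ((n : ℤ) - j - j * ((n : ℤ) - j)) * (1 - q ^ (j : ℤ)) / (1 - q ^ ((n : ℤ) - j)) *
          hermProdPos n j) • T (2 * (j : ℤ) - n)
    + ∑ j ∈ Finset.Icc 1 ((n - 1) / 2),
        (q ^ ((j : ℤ) - j * ((n : ℤ) - j)) * hermProdPos n j) • T ((n : ℤ) - 2 * j)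

/-- `Ē†_{-n}` for `n ≥ 1`. -/
def EHdagNeg (n : ℕ) : L :=
  T (-(n : ℤ)) + q ^ (-(n : ℤ)) • T (n : ℤ)
    + ∑ j ∈ Finset.Icc 1 (n / 2),
        (q ^ (-(j : ℤ) * ((n : ℤ) - j + 1)) * hermProdNeg n j) • T (2 * (j : ℤ) - n)
    + ∑ j ∈ Finset.Icc 1 ((n - 1) / 2),
        (q ^ (2 * (j : ℤ) - n - j * ((n : ℤ) - j + 1)) * hermProdNeg n j) • T ((n : ℤ) - 2 * j)

/-- The `t → ∞` limits `Ē†_n` of the nonsymmetric Macdonald polynomials, `n ∈ ℤ`. -/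
def EHdag : ℤ → L := fun n =>
  if 0 < n then EHdagPos n.toNat else if n = 0 then 1 else EHdagNeg (-n).toNat

/-!
`hermProdNeg n j` is the Gaussian binomial `[n, j]_q` (zero for `j > n`), and
`hermProdPos (n + 1) = hermProdNeg n`. Indexing the monomials of the defining sums by `X^{n-2i}`,
the symmetry `[n, n - i]_q = [n, i]_q` merges the two halves of each sum into
`Ē_{-n} = ∑_{i ≤ n} [n, i]_q X^{n-2i}` and `Ē_{n+1} = ∑_{i ≤ n+1} q^i [n, i]_q X^{n+1-2i}`.
Multiplication by `X⁻¹` only shifts `i`, so the two `X⁻¹`-rules become coefficientwise identities: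
the q-Pascal rule `[n+1, i+1]_q = q^{i+1} [n, i+1]_q + [n, i]_q` and the absorption rule
`(1 - q^{n+1-i}) [n+1, i]_q = (1 - q^{n+1}) [n, i]_q`. The two `X`-rules follow, because by the
`X⁻¹`-rules `X⁻¹` maps their right-hand sides back to `Ē_{-n}` and `Ē_n`.
-/

open Finset

theorem sum_range_succ_eq_ends_add_halves {M : Type*} [AddCommMonoid M] (f : ℕ → M) {n : ℕ}
    (hn : 1 ≤ n) :
    ∑ i ∈ range (n + 1), f i
      = f n + f 0 + ∑ j ∈ Icc 1 (n / 2), f (n - j) + ∑ j ∈ Icc 1 ((n - 1) / 2), f j := by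
  obtain ⟨m, rfl⟩ : ∃ m, n = m + 1 := ⟨n - 1, by omega⟩
  have hlow : ∑ i ∈ range (m / 2), f (i + 1) = ∑ j ∈ Icc 1 (m / 2), f j :=
    sum_nbij' (· + 1) (· - 1)
      (fun i hi => by simp only [mem_range, mem_Icc] at hi ⊢; omega)
      (fun j hj => by simp only [mem_range, mem_Icc] at hj ⊢; omega)
      (fun i _ => Nat.add_sub_cancel _ _)
      (fun j hj => by simp only [mem_Icc] at hj; omega)
      (fun i _ => rfl)
  have hhigh : ∑ i ∈ range ((m + 1) / 2), f (m / 2 + i + 1)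
      = ∑ j ∈ Icc 1 ((m + 1) / 2), f (m + 1 - j) :=
    sum_nbij' ((m + 1) / 2 - ·) ((m + 1) / 2 - ·)
      (fun i hi => by simp only [mem_range, mem_Icc] at hi ⊢; omega)
      (fun j hj => by simp only [mem_range, mem_Icc] at hj ⊢; omega)
      (fun i hi => by simp only [mem_range] at hi; omega)
      (fun j hj => by simp only [mem_Icc] at hj; omega)
      (fun i hi => by simp only [mem_range] at hi; congr 1; omega)
  have hmid := sum_range_add (fun i => f (i + 1)) (m / 2) ((m + 1) / 2)
  rw [show m / 2 + (m + 1) / 2 = m by omega, hlow, hhigh] at hmid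
  rw [sum_range_succ, sum_range_succ', hmid, Nat.add_sub_cancel]
  abel

theorem T_one_mul_eq_of_T_neg_one_mul_eq {R : Type*} [Semiring R] {f g : R[T;T⁻¹]}
    (h : T (-1) * g = f) : T 1 * f = g := by
  rw [← h, ← mul_assoc, ← T_add, add_neg_cancel, T_zero, one_mul]

section HermiteSum

variable {R : Type*} [CommSemiring R]

def hermiteSum (n : ℕ) : (ℕ → R) →ₗ[R] R[T;T⁻¹] where
  toFun c := ∑ i ∈ range (n + 1), c i • T ((n : ℤ) - 2 * i)
  map_add' c d := by simp only [Pi.add_apply, add_smul, sum_add_distrib]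
  map_smul' a c := by simp only [Pi.smul_apply, smul_eq_mul, mul_smul, smul_sum, RingHom.id_apply]

theorem hermiteSum_apply (n : ℕ) (c : ℕ → R) :
    hermiteSum n c = ∑ i ∈ range (n + 1), c i • T ((n : ℤ) - 2 * i) := rfl

theorem T_neg_one_mul_hermiteSum (n : ℕ) (c d : ℕ → R) (hd₀ : d 0 = 0)
    (hd : ∀ i, d (i + 1) = c i) :
    T (-1) * hermiteSum n c = hermiteSum (n + 1) d := by
  simp only [hermiteSum_apply, sum_range_succ' _ (n + 1), hd₀, zero_smul, add_zero, hd,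
    mul_sum, mul_smul_comm, ← T_add]
  refine sum_congr rfl fun i _ => ?_
  congr 2
  push_cast
  ring

theorem T_neg_one_mul_hermiteSum_succ (n : ℕ) (c : ℕ → R) (hc : c (n + 1) = 0) :
    T (-1) * hermiteSum (n + 1) c = hermiteSum n c := by
  simp only [hermiteSum_apply, sum_range_succ _ (n + 1), hc, zero_smul, add_zero,
    mul_sum, mul_smul_comm, ← T_add]
  refine sum_congr rfl fun i _ => ?_
  congr 2
  push_cast
  ring

end HermiteSum

theorem q_ne_zero : q ≠ 0 := pow_ne_zero _ RatFunc.X_ne_zero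

theorem one_sub_q_zpow_ne_zero {m : ℤ} (hm : 0 < m) : 1 - q ^ m ≠ 0 := by
  lift m to ℕ using hm.le
  refine sub_ne_zero.2 fun h => ?_
  have hX : (Polynomial.X : Polynomial ℚ) ^ (4 * m) = 1 :=
    RatFunc.algebraMap_injective ℚ (by simpa [q, u, pow_mul] using h.symm)
  have := congrArg Polynomial.natDegree hX
  rw [Polynomial.natDegree_X_pow, Polynomial.natDegree_one] at this
  omega

theorem hermProdNeg_zero_right (n : ℕ) : hermProdNeg n 0 = 1 := prod_range_zero _

theorem hermProdNeg_succ_self (n : ℕ) : hermProdNeg n (n + 1) = 0 :=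
  prod_eq_zero (mem_range.2 n.lt_succ_self) (by simp)

theorem hermProdPos_succ (n j : ℕ) : hermProdPos (n + 1) j = hermProdNeg n j := by
  refine prod_congr rfl fun i _ => ?_
  push_cast
  ring_nf

theorem one_sub_mul_hermProdNeg_succ_right (n j : ℕ) :
    (1 - q ^ ((j : ℤ) + 1)) * hermProdNeg n (j + 1)
      = (1 - q ^ ((n : ℤ) - j)) * hermProdNeg n j := by
  rw [hermProdNeg, prod_range_succ, ← hermProdNeg]
  field_simp [one_sub_q_zpow_ne_zero (by omega : (0 : ℤ) < j + 1)]

theorem one_sub_mul_hermProdNeg_succ_left (n j : ℕ) :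
    (1 - q ^ ((n : ℤ) + 1 - j)) * hermProdNeg (n + 1) j
      = (1 - q ^ ((n : ℤ) + 1)) * hermProdNeg n j := by
  induction j with
  | zero => simp [hermProdNeg_zero_right]
  | succ j ih =>
    refine mul_left_cancel₀ (one_sub_q_zpow_ne_zero (by omega : (0 : ℤ) < j + 1)) ?_
    have hn := one_sub_mul_hermProdNeg_succ_right n j
    have hn₁ := one_sub_mul_hermProdNeg_succ_right (n + 1) j
    push_cast at hn₁ ⊢
    rw [show (n : ℤ) + 1 - (j + 1) = n - j by ring]
    linear_combination (1 - q ^ ((n : ℤ) - j)) * (hn₁ + ih) - (1 - q ^ ((n : ℤ) + 1)) * hn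

theorem hermProdNeg_succ_succ (n j : ℕ) :
    hermProdNeg (n + 1) (j + 1) = q ^ ((j : ℤ) + 1) * hermProdNeg n (j + 1) + hermProdNeg n j := by
  refine mul_left_cancel₀ (one_sub_q_zpow_ne_zero (by omega : (0 : ℤ) < j + 1)) ?_
  have hq : q ^ ((j : ℤ) + 1) * q ^ ((n : ℤ) - j) = q ^ ((n : ℤ) + 1) := by
    rw [← zpow_add₀ q_ne_zero]; ring_nf
  have hn := one_sub_mul_hermProdNeg_succ_right n j
  have hn₁ := one_sub_mul_hermProdNeg_succ_right (n + 1) j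
  have habs := one_sub_mul_hermProdNeg_succ_left n j
  push_cast at hn₁
  linear_combination hn₁ + habs - q ^ ((j : ℤ) + 1) * hn + hermProdNeg n j * hq

def qPochhammer (n : ℕ) : K := ∏ i ∈ range n, (1 - q ^ ((i : ℤ) + 1))

theorem qPochhammer_succ (n : ℕ) :
    qPochhammer (n + 1) = qPochhammer n * (1 - q ^ ((n : ℤ) + 1)) :=
  prod_range_succ _ _

theorem qPochhammer_ne_zero (n : ℕ) : qPochhammer n ≠ 0 :=
  prod_ne_zero_iff.2 fun i _ => one_sub_q_zpow_ne_zero (by omega)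

theorem hermProdNeg_mul_qPochhammer_mul_qPochhammer {n j : ℕ} (h : j ≤ n) :
    hermProdNeg n j * qPochhammer j * qPochhammer (n - j) = qPochhammer n := by
  induction j with
  | zero => simp [hermProdNeg_zero_right, qPochhammer]
  | succ j ih =>
    obtain ⟨k, hk⟩ : ∃ k, n - j = k + 1 := ⟨n - j - 1, by omega⟩
    have hrec := one_sub_mul_hermProdNeg_succ_right n j
    have hk' : (n : ℤ) - j = k + 1 := by omega
    rw [← ih (by omega), hk, show n - (j + 1) = k by omega, qPochhammer_succ, qPochhammer_succ,
      ← hk']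
    linear_combination qPochhammer j * qPochhammer k * hrec

theorem hermProdNeg_symm {n j : ℕ} (h : j ≤ n) : hermProdNeg n (n - j) = hermProdNeg n j := by
  have h₁ := hermProdNeg_mul_qPochhammer_mul_qPochhammer (Nat.sub_le n j)
  rw [Nat.sub_sub_self h, ← hermProdNeg_mul_qPochhammer_mul_qPochhammer h] at h₁
  exact mul_right_cancel₀ (b := qPochhammer j * qPochhammer (n - j))
    (mul_ne_zero (qPochhammer_ne_zero _) (qPochhammer_ne_zero _)) (by linear_combination h₁)

theorem hermProdNeg_self (n : ℕ) : hermProdNeg n n = 1 := by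
  simpa [hermProdNeg_zero_right] using hermProdNeg_symm (Nat.zero_le n)

theorem EHneg_eq_hermiteSum {n : ℕ} (hn : 1 ≤ n) : EHneg n = hermiteSum n (hermProdNeg n) := by
  rw [hermiteSum_apply, sum_range_succ_eq_ends_add_halves _ hn, EHneg]
  congr 1
  congr 1
  congr 1
  · rw [hermProdNeg_self, one_smul]
    ring_nf
  · simp [hermProdNeg_zero_right]
  · refine sum_congr rfl fun j hj => ?_
    have hjn : j ≤ n := by have := mem_Icc.1 hj; omega
    rw [hermProdNeg_symm hjn, Nat.cast_sub hjn]
    ring_nf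

theorem EHpos_succ_eq_hermiteSum (n : ℕ) :
    EHpos (n + 1) = hermiteSum (n + 1) (fun i => q ^ (i : ℤ) * hermProdNeg n i) := by
  rw [hermiteSum_apply, sum_range_succ_eq_ends_add_halves _ (Nat.le_add_left 1 n), EHpos]
  simp only [hermProdNeg_succ_self, mul_zero, zero_smul, zero_add, hermProdPos_succ]
  congr 1
  congr 1
  · simp [hermProdNeg_zero_right]
  · refine sum_congr rfl fun j hj => ?_
    obtain ⟨hj₁, hj₂⟩ := mem_Icc.1 hj
    obtain ⟨k, rfl⟩ : ∃ k, j = k + 1 := ⟨j - 1, by omega⟩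
    have hkn : k ≤ n := by omega
    have hrec := one_sub_mul_hermProdNeg_succ_right n k
    have hden := one_sub_q_zpow_ne_zero (by omega : (0 : ℤ) < n - k)
    rw [show n + 1 - (k + 1) = n - k by omega, hermProdNeg_symm hkn, Nat.cast_sub hkn]
    push_cast
    congr 1
    · rw [show (n : ℤ) + 1 - (k + 1) = n - k by ring]
      field_simp
      linear_combination q ^ ((n : ℤ) - k) * hrec
    · ring_nf

theorem EH_neg_natCast (n : ℕ) : EH (-n) = hermiteSum n (hermProdNeg n) := by
  rcases Nat.eq_zero_or_pos n with rfl | hn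
  · simp [EH, hermiteSum_apply, hermProdNeg_zero_right]
  · simp [EH, hn.ne', EHneg_eq_hermiteSum hn]

theorem EH_natCast_succ (n : ℕ) :
    EH ((n : ℤ) + 1) = hermiteSum (n + 1) (fun i => q ^ (i : ℤ) * hermProdNeg n i) := by
  rw [← EHpos_succ_eq_hermiteSum]
  simp [EH]

theorem T_neg_one_mul_EH_neg_natCast (n : ℕ) :
    T (-1) * EH (-(n : ℤ)) = EH (-(n : ℤ) - 1) - EH ((n : ℤ) + 1) := by
  rw [show -(n : ℤ) - 1 = -((n + 1 : ℕ) : ℤ) by push_cast; ring, EH_neg_natCast, EH_neg_natCast,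
    EH_natCast_succ, ← map_sub]
  refine T_neg_one_mul_hermiteSum n _ _ (by simp [hermProdNeg_zero_right]) fun i => ?_
  simp only [Pi.sub_apply, hermProdNeg_succ_succ]
  push_cast
  ring

theorem T_neg_one_mul_EH_natCast_succ (n : ℕ) :
    T (-1) * EH ((n : ℤ) + 1) = (1 - q ^ (n : ℤ)) • EH n + q ^ (n : ℤ) • EH (-(n : ℤ)) := by
  rw [EH_natCast_succ, T_neg_one_mul_hermiteSum_succ _ _ (by simp [hermProdNeg_succ_self])]
  cases n with
  | zero => simp [EH, hermiteSum_apply, hermProdNeg_zero_right]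
  | succ m =>
    rw [EH_neg_natCast, Nat.cast_succ, EH_natCast_succ, ← map_smul, ← map_smul, ← map_add]
    congr 1
    funext i
    have habs := one_sub_mul_hermProdNeg_succ_left m i
    have hq : q ^ (i : ℤ) * q ^ ((m : ℤ) + 1 - i) = q ^ ((m : ℤ) + 1) := by
      rw [← zpow_add₀ q_ne_zero]; ring_nf
    simp only [Pi.add_apply, Pi.smul_apply, smul_eq_mul]
    linear_combination q ^ (i : ℤ) * habs + hermProdNeg (m + 1) i * hq

theorem T_one_mul_EH_neg_natCast (n : ℕ) :
    T 1 * EH (-(n : ℤ)) = (1 - q ^ (n : ℤ)) • EH (1 - (n : ℤ)) + EH ((n : ℤ) + 1) := by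
  apply T_one_mul_eq_of_T_neg_one_mul_eq
  have hshift : (1 - q ^ (n : ℤ)) • (T (-1) * EH (1 - (n : ℤ)))
      = (1 - q ^ (n : ℤ)) • (EH (-(n : ℤ)) - EH n) := by
    cases n with
    | zero => simp
    | succ m =>
      rw [show 1 - ((m + 1 : ℕ) : ℤ) = -(m : ℤ) by push_cast; ring, T_neg_one_mul_EH_neg_natCast]
      push_cast
      ring_nf
  rw [mul_add, mul_smul_comm, hshift, T_neg_one_mul_EH_natCast_succ, smul_sub, sub_smul, one_smul]
  abel

theorem T_one_mul_EH_natCast_succ (n : ℕ) :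
    T 1 * EH ((n : ℤ) + 1) = EH ((n : ℤ) + 1 + 1) - q ^ ((n : ℤ) + 1) • EH (-(n : ℤ)) := by
  apply T_one_mul_eq_of_T_neg_one_mul_eq
  have := T_neg_one_mul_EH_natCast_succ (n + 1)
  push_cast [neg_add'] at this
  rw [mul_sub, mul_smul_comm, T_neg_one_mul_EH_neg_natCast, this, sub_smul, one_smul, smul_sub]
  abel

/-- Pieri rules for nonsymmetric q-Hermite polynomials (here `T 1 = X`, `T (-1) = X⁻¹`):
`X⁻¹·Ē_{-n} = Ē_{-n-1} - Ē_{n+1}` for all `n ≥ 0`;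
`X⁻¹·Ē_n = (1 - q^{n-1})·Ē_{n-1} + q^{n-1}·Ē_{1-n}` for all `n ≥ 1`;
`X·Ē_{-n} = (1 - qⁿ)·Ē_{1-n} + Ē_{n+1}` for all `n ≥ 0`;
`X·Ē_n = Ē_{n+1} - qⁿ·Ē_{1-n}` for all `n ≥ 1`. -/
theorem hermite_pieri_rules :
    (∀ n : ℕ, T (-1) * EH (-(n : ℤ)) = EH (-(n : ℤ) - 1) - EH ((n : ℤ) + 1)) ∧
    (∀ n : ℕ, 1 ≤ n →
      T (-1) * EH (n : ℤ) =
        (1 - q ^ ((n : ℤ) - 1)) • EH ((n : ℤ) - 1) + q ^ ((n : ℤ) - 1) • EH (1 - (n : ℤ))) ∧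
    (∀ n : ℕ, T 1 * EH (-(n : ℤ)) = (1 - q ^ (n : ℤ)) • EH (1 - (n : ℤ)) + EH ((n : ℤ) + 1)) ∧
    (∀ n : ℕ, 1 ≤ n →
      T 1 * EH (n : ℤ) = EH ((n : ℤ) + 1) - q ^ (n : ℤ) • EH (1 - (n : ℤ))) := by
  refine ⟨T_neg_one_mul_EH_neg_natCast, fun n hn => ?_, T_one_mul_EH_neg_natCast, fun n hn => ?_⟩
  all_goals
    obtain ⟨m, rfl⟩ := Nat.exists_eq_add_of_le' hn
    push_cast
  · simpa [neg_add'] using T_neg_one_mul_EH_natCast_succ m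
  · simpa [neg_add'] using T_one_mul_EH_natCast_succ m
end
end

section
/- The spinor-polynomial representation: the subspace 𝒳_spin is invariant under the three operators T̂, π̂ and Ŷ_γ (the Gaussian-conjugated spinor Dunkl operator), and it is irreducible under them: every K-subspace W ⊆ 𝒳_spin with W ≠ {0} that is invariant under T̂, π̂ and Ŷ_γ equals 𝒳_spin. -/
/-!
The spinor Dunkl operators for the q-Toda theory of type A₁, acting on the space
`V = L × L` of spinors, where `L = K[X,X⁻¹]` is the ring of Laurent polynomials over
`K = ℚ(u)`, `q = u⁴`.
-/

noncomputable section

open LaurentPolynomial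

/-- The space of spinors: pairs of Laurent polynomials. -/
abbrev V : Type := L × L

/-- The `K`-algebra automorphism `Γ` of `L` with `Γ(X) = q^{1/2}X`. -/
def gam (f : L) : L := f.coeff.sum fun e r => (r * (u ^ 2) ^ e) • T e

/-- The inverse automorphism `Γ⁻¹`, with `Γ⁻¹(X) = q^{-1/2}X`. -/
def gamInv (f : L) : L := f.coeff.sum fun e r => (r * (u ^ 2) ^ (-e)) • T e

/-- The spinor operator `T̂(f₁,f₂) = (0, f₁ - f₂)`. -/
def That (p : V) : V := (0, p.1 - p.2)

/-- The spinor operator `π̂(f₁,f₂) = (X·f₂ + X⁻¹·(f₁-f₂), X⁻¹·(f₁-f₂))`. -/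
def piHat (p : V) : V :=
  (T 1 * p.2 + T (-1) * (p.1 - p.2), T (-1) * (p.1 - p.2))

/-- The spinor Dunkl operator
`Ŷ(f₁,f₂) = (Γ⁻¹(f₁-f₂), Γ(f₂) - Γ(X⁻²·(f₂-f₁)))`. -/
def Yhat (p : V) : V :=
  (gamInv (p.1 - p.2), gam p.2 - gam (T (-2) * (p.2 - p.1)))

/-- The spinor Dunkl operator
`Ŷ′(f₁,f₂) = ((1-X⁻²)·Γ(f₁) + Γ⁻¹(f₂), Γ⁻¹(f₂) - X⁻²·Γ(f₁))`. -/
def Yhat' (p : V) : V :=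
  ((1 - T (-2)) * gam p.1 + gamInv p.2, gamInv p.2 - T (-2) * gam p.1)
/-- The Gaussian-conjugated spinor Dunkl operator
`Ŷ_γ(f₁,f₂) = q^{1/4}·(X⁻¹·Γ⁻¹(f₁-f₂), X·Γ(f₂) + q⁻¹·X⁻¹·Γ(f₁-f₂))`. -/
def YhatGam (p : V) : V :=
  u • (T (-1) * gamInv (p.1 - p.2),
       T 1 * gam p.2 + (q⁻¹ : K) • (T (-1) * gam (p.1 - p.2)))

/-- The spinor-polynomial subspace `𝒳_spin`, the span of the spinors `(1,1)`,
`(Xᵐ,0)` for `m ≥ 1` and `(0,Xᵐ)` for `m ≥ 1`. -/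
def Xspin : Submodule K V :=
  Submodule.span K
    ({((1 : L), (1 : L))} ∪ {p : V | ∃ m : ℕ, 1 ≤ m ∧ p = (T (m : ℤ), 0)} ∪
      {p : V | ∃ m : ℕ, 1 ≤ m ∧ p = (0, T (m : ℤ))})


/-!
`𝒳_spin` is the space of pairs of polynomials with equal constant terms, and in this form its
stability under `T̂`, `π̂` and `Ŷ_γ` is a direct check on coefficients.

For irreducibility, `p + T̂ p = (p₁, p₁)`, so a nonzero stable `W` contains a nonzero diagonal
spinor `(g, g)`. Since `Ŷ_γ π̂ (g, g) = q^{-1/4} (Γ⁻¹ g, Γ g)`, the diagonal of `W` is stable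
under `Γ⁻¹`, which acts on the monomials `Xⁿ` by the pairwise distinct scalars `q^{-n/2}`; hence
`W` contains some `(Xᵐ, Xᵐ)`. Then `π̂` and `Ŷ_γ` produce `(Xᵐ⁺¹, Xᵐ⁺¹)`, while for `m ≠ 0` the
distinct scalars `q^{∓m/2}` let `T̂` split off `(Xᵐ, 0)`, whose image under `π̂` is
`(Xᵐ⁻¹, Xᵐ⁻¹)`. So `W` contains every `(Xⁿ, Xⁿ)` with `n ≥ 0`, and with them all generators.
-/

namespace LaurentPolynomial

section Semiring

variable {R : Type*} [Semiring R]

lemma smul_T (r : R) (n : ℤ) : r • (T n : R[T;T⁻¹]) = .single n r := by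
  rw [T, AddMonoidAlgebra.smul_single', mul_one]

lemma coeff_mul_T (f : R[T;T⁻¹]) (k n : ℤ) : (f * T k).coeff n = f.coeff (n - k) := by
  rw [T, AddMonoidAlgebra.coeff_mul_single_apply, mul_one, sub_eq_add_neg]

lemma coeff_sum_smul_T (f : R[T;T⁻¹]) (φ : ℤ → R) (n : ℤ) :
    (f.coeff.sum fun e r => (r * φ e) • T e).coeff n = f.coeff n * φ n := by
  simp only [smul_T, Finsupp.sum, AddMonoidAlgebra.coeff_sum, Finsupp.finsetSum_apply,
    AddMonoidAlgebra.coeff_single, Finsupp.single_apply, Finset.sum_ite_eq',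
    Finsupp.mem_support_iff]
  split_ifs with h
  · rfl
  · rw [Finsupp.notMem_support_iff.mp h, zero_mul]

lemma mem_of_forall_T_mem {P : Submodule R R[T;T⁻¹]} {f : R[T;T⁻¹]}
    (h : ∀ n, f.coeff n ≠ 0 → T n ∈ P) : f ∈ P := by
  rw [← f.sum_coeff_single]
  exact Submodule.finsuppSum_mem _ _ _ _ fun n hn => smul_T (f.coeff n) n ▸ P.smul_mem _ (h n hn)

end Semiring

lemma exists_T_mem_of_diagonal_invariant {F : Type*} [Field F] {A : F[T;T⁻¹] → F[T;T⁻¹]}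
    {μ : ℤ → F} (hμ : Function.Injective μ) (hA : ∀ f n, (A f).coeff n = f.coeff n * μ n)
    {P : Submodule F F[T;T⁻¹]} (hP : ∀ f ∈ P, A f ∈ P) {f : F[T;T⁻¹]} (hf : f ∈ P)
    (hf0 : f ≠ 0) : ∃ m, T m ∈ P := by
  suffices ∀ s : Finset ℤ, ∀ f ∈ P, f ≠ 0 → f.coeff.support ⊆ s → ∃ m, T m ∈ P from
    this _ f hf hf0 subset_rfl
  intro s
  induction s using Finset.induction_on with
  | empty =>
    intro f _ hf0 hs
    exact absurd (AddMonoidAlgebra.coeff_inj.mp (Finsupp.support_eq_empty.mp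
      (Finset.subset_empty.mp hs))) hf0
  | insert a s _ ih =>
    intro f hf hf0 hs
    -- `A - μ a` kills the coefficient at `a` and rescales the others by nonzero factors
    have hg : ∀ n, (A f - μ a • f).coeff n = f.coeff n * (μ n - μ a) := fun n => by
      simp only [AddMonoidAlgebra.coeff_sub, AddMonoidAlgebra.coeff_smul, Finsupp.sub_apply,
        Finsupp.smul_apply, hA, smul_eq_mul]
      ring
    have hgP : A f - μ a • f ∈ P := P.sub_mem (hP f hf) (P.smul_mem _ hf)
    by_cases hg0 : A f - μ a • f = 0
    · have hfa : f = f.coeff a • T a := LaurentPolynomial.ext fun n => by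
        by_cases hn : a = n
        · simp [hn]
        · have := hg n
          rw [hg0, AddMonoidAlgebra.coeff_zero, Finsupp.zero_apply, eq_comm, mul_eq_zero,
            sub_eq_zero, hμ.eq_iff] at this
          simp [hn, this.resolve_right (Ne.symm hn)]
      have hfa0 : f.coeff a ≠ 0 := fun h => hf0 (by rw [hfa, h, zero_smul])
      refine ⟨a, ?_⟩
      rw [hfa] at hf
      exact (P.smul_mem_iff hfa0).mp hf
    · refine ih _ hgP hg0 fun n hn => ?_
      rw [Finsupp.mem_support_iff, hg, mul_ne_zero_iff, sub_ne_zero, hμ.ne_iff] at hn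
      exact (Finset.mem_insert.mp (hs (Finsupp.mem_support_iff.mpr hn.1))).resolve_left hn.2

end LaurentPolynomial

lemma u_ne_zero : u ≠ 0 := RatFunc.X_ne_zero

lemma intDegree_u_zpow (k : ℤ) : (u ^ k).intDegree = k := by
  induction k using Int.induction_on with
  | zero => rw [zpow_zero, RatFunc.intDegree_one]
  | succ n ih =>
    rw [zpow_add_one₀ u_ne_zero, RatFunc.intDegree_mul (zpow_ne_zero _ u_ne_zero) u_ne_zero, ih,
      u, RatFunc.intDegree_X]
  | pred n ih =>
    rw [zpow_sub_one₀ u_ne_zero,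
      RatFunc.intDegree_mul (zpow_ne_zero _ u_ne_zero) (inv_ne_zero u_ne_zero),
      RatFunc.intDegree_inv, ih, u, RatFunc.intDegree_X, sub_eq_add_neg]

lemma zpow_u_sq_injective : Function.Injective fun n : ℤ => (u ^ 2) ^ n := by
  intro a b hab
  have hdeg := congrArg RatFunc.intDegree hab
  simp only [← zpow_natCast, ← zpow_mul, intDegree_u_zpow] at hdeg
  omega

lemma coeff_gam (f : L) (n : ℤ) : (gam f).coeff n = f.coeff n * (u ^ 2) ^ n :=
  coeff_sum_smul_T f _ n

lemma coeff_gamInv (f : L) (n : ℤ) : (gamInv f).coeff n = f.coeff n * (u ^ 2) ^ (-n) :=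
  coeff_sum_smul_T f _ n

lemma gam_T (m : ℤ) : gam (T m) = (u ^ 2) ^ m • T m :=
  LaurentPolynomial.ext fun n => by
    by_cases h : m = n <;> simp [coeff_gam, h]

lemma gamInv_T (m : ℤ) : gamInv (T m) = (u ^ 2) ^ (-m) • T m :=
  LaurentPolynomial.ext fun n => by
    by_cases h : m = n <;> simp [coeff_gamInv, h]

lemma coeff_piHat_fst (f₁ f₂ : L) (n : ℤ) :
    (piHat (f₁, f₂)).1.coeff n = f₂.coeff (n - 1) + (f₁ - f₂).coeff (n + 1) := by
  simp [piHat, coeff_mul_T]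

lemma coeff_piHat_snd (f₁ f₂ : L) (n : ℤ) :
    (piHat (f₁, f₂)).2.coeff n = (f₁ - f₂).coeff (n + 1) := by
  simp [piHat, coeff_mul_T]

lemma coeff_YhatGam_fst (f₁ f₂ : L) (n : ℤ) :
    (YhatGam (f₁, f₂)).1.coeff n = u * ((f₁ - f₂).coeff (n + 1) * (u ^ 2) ^ (-(n + 1))) := by
  simp [YhatGam, coeff_mul_T, coeff_gamInv]

lemma coeff_YhatGam_snd (f₁ f₂ : L) (n : ℤ) :
    (YhatGam (f₁, f₂)).2.coeff n = u * (f₂.coeff (n - 1) * (u ^ 2) ^ (n - 1) +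
      q⁻¹ * ((f₁ - f₂).coeff (n + 1) * (u ^ 2) ^ (n + 1))) := by
  simp [YhatGam, coeff_mul_T, coeff_gam, mul_add]

def polySpinors : Submodule K V where
  carrier := {p | (∀ n < 0, p.2.coeff n = 0) ∧ ∀ n ≤ 0, (p.1 - p.2).coeff n = 0}
  add_mem' := by
    rintro p p' ⟨hp, hp'⟩ ⟨hq, hq'⟩
    refine ⟨fun n hn => ?_, fun n hn => ?_⟩
    · simp [hp n hn, hq n hn]
    · rw [Prod.fst_add, Prod.snd_add, add_sub_add_comm, AddMonoidAlgebra.coeff_add,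
        Finsupp.add_apply, hp' n hn, hq' n hn, add_zero]
  zero_mem' := by simp
  smul_mem' := by
    rintro c p ⟨hp, hp'⟩
    refine ⟨fun n hn => by simp [hp n hn], fun n hn => ?_⟩
    rw [Prod.smul_fst, Prod.smul_snd, ← smul_sub, AddMonoidAlgebra.coeff_smul_apply, hp' n hn,
      smul_zero]

lemma mk_one_one_mem_Xspin : ((1, 1) : V) ∈ Xspin :=
  Submodule.subset_span (.inl (.inl rfl))

lemma mk_T_zero_mem_Xspin {m : ℤ} (hm : 0 < m) : ((T m, 0) : V) ∈ Xspin :=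
  Submodule.subset_span (.inl (.inr ⟨m.toNat, by omega, by rw [Int.toNat_of_nonneg hm.le]⟩))

lemma mk_zero_T_mem_Xspin {m : ℤ} (hm : 0 < m) : ((0, T m) : V) ∈ Xspin :=
  Submodule.subset_span (.inr ⟨m.toNat, by omega, by rw [Int.toNat_of_nonneg hm.le]⟩)

lemma mk_T_T_mem_Xspin {m : ℤ} (hm : 0 ≤ m) : ((T m, T m) : V) ∈ Xspin := by
  obtain rfl | hm := hm.eq_or_lt
  · exact T_zero (R := K) ▸ mk_one_one_mem_Xspin
  · simpa using Xspin.add_mem (mk_T_zero_mem_Xspin hm) (mk_zero_T_mem_Xspin hm)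

lemma Xspin_eq_polySpinors : Xspin = polySpinors := by
  refine le_antisymm (Submodule.span_le.mpr ?_) fun p ⟨hp2, hp12⟩ => ?_
  · rintro _ ((rfl | ⟨m, hm, rfl⟩) | ⟨m, hm, rfl⟩) <;>
      refine ⟨fun n hn => ?_, fun n hn => ?_⟩ <;>
      simp only [← T_zero, T_apply, sub_self, sub_zero, zero_sub, AddMonoidAlgebra.coeff_zero,
        AddMonoidAlgebra.coeff_neg, Finsupp.coe_zero, Finsupp.coe_neg, Pi.zero_apply, Pi.neg_apply,
        neg_eq_zero, ite_eq_right_iff, one_ne_zero, imp_false] <;> omega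
  · have hdiag : ((p.2, p.2) : V) ∈ Xspin :=
      mem_of_forall_T_mem (P := Xspin.comap (LinearMap.id.prod LinearMap.id)) fun n hn =>
        mk_T_T_mem_Xspin (not_lt.mp fun h => hn (hp2 n h))
    have hinl : ((p.1 - p.2, 0) : V) ∈ Xspin :=
      mem_of_forall_T_mem (P := Xspin.comap (LinearMap.inl K L L)) fun n hn =>
        mk_T_zero_mem_Xspin (not_le.mp fun h => hn (hp12 n h))
    convert Xspin.add_mem hdiag hinl using 1
    ext : 1 <;> simp

lemma That_mem_Xspin {p : V} (hp : p ∈ Xspin) : That p ∈ Xspin := by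
  rw [Xspin_eq_polySpinors] at hp ⊢
  obtain ⟨-, hp12⟩ := hp
  refine ⟨fun n hn => hp12 n hn.le, fun n hn => ?_⟩
  rw [That, zero_sub, AddMonoidAlgebra.coeff_neg, Finsupp.neg_apply, hp12 n hn, neg_zero]

lemma piHat_mem_Xspin {p : V} (hp : p ∈ Xspin) : piHat p ∈ Xspin := by
  obtain ⟨f₁, f₂⟩ := p
  rw [Xspin_eq_polySpinors] at hp ⊢
  obtain ⟨hp2, hp12⟩ := hp
  refine ⟨fun n hn => ?_, fun n hn => ?_⟩
  · rw [coeff_piHat_snd, hp12 (n + 1) (by omega)]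
  · rw [AddMonoidAlgebra.coeff_sub, Finsupp.sub_apply, coeff_piHat_fst, coeff_piHat_snd,
      hp2 (n - 1) (by omega), zero_add, sub_self]

lemma YhatGam_mem_Xspin {p : V} (hp : p ∈ Xspin) : YhatGam p ∈ Xspin := by
  obtain ⟨f₁, f₂⟩ := p
  rw [Xspin_eq_polySpinors] at hp ⊢
  obtain ⟨hp2, hp12⟩ := hp
  refine ⟨fun n hn => ?_, fun n hn => ?_⟩
  · rw [coeff_YhatGam_snd, hp2 (n - 1) (by omega), hp12 (n + 1) (by omega)]
    simp
  rw [AddMonoidAlgebra.coeff_sub, Finsupp.sub_apply, sub_eq_zero, coeff_YhatGam_fst,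
    coeff_YhatGam_snd, hp2 (n - 1) (by omega), zero_mul, zero_add]
  obtain hn | rfl := hn.lt_or_eq
  · rw [hp12 (n + 1) (by omega)]
    simp
  · rw [zero_add, zpow_one, zpow_neg_one, q]
    field_simp

lemma piHat_diag (g : L) : piHat (g, g) = (g * T 1, 0) := by
  simp [piHat, T_mul]

lemma piHat_mk_zero (f : L) : piHat (f, 0) = (f * T (-1), f * T (-1)) := by
  simp [piHat, T_mul]

lemma YhatGam_diag (g : L) : YhatGam (g, g) = (0, u • (gam g * T 1)) := by
  ext n <;> simp [YhatGam, coeff_mul_T, coeff_gam, coeff_gamInv]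

lemma YhatGam_piHat_diag (g : L) : YhatGam (piHat (g, g)) = u⁻¹ • (gamInv g, gam g) := by
  have hu2 : u ^ 2 ≠ 0 := pow_ne_zero 2 u_ne_zero
  ext n
  · rw [piHat_diag, coeff_YhatGam_fst, sub_zero, coeff_mul_T, add_sub_cancel_right, Prod.smul_fst,
      AddMonoidAlgebra.coeff_smul_apply, coeff_gamInv, neg_add, zpow_add₀ hu2, zpow_neg_one,
      smul_eq_mul]
    field_simp
  · rw [piHat_diag, coeff_YhatGam_snd, sub_zero, coeff_mul_T, add_sub_cancel_right,
      AddMonoidAlgebra.coeff_zero, Finsupp.zero_apply, zero_mul, zero_add, Prod.smul_snd,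
      AddMonoidAlgebra.coeff_smul_apply, coeff_gam, zpow_add_one₀ hu2, q, smul_eq_mul]
    field_simp

def IsStable (W : Submodule K V) : Prop :=
  ∀ p ∈ W, That p ∈ W ∧ piHat p ∈ W ∧ YhatGam p ∈ W

namespace IsStable

variable {W : Submodule K V}

lemma mk_fst_fst_mem (hW : IsStable W) {p : V} (hp : p ∈ W) : ((p.1, p.1) : V) ∈ W := by
  convert W.add_mem hp (hW p hp).1 using 1
  ext : 1 <;> simp [That]

lemma exists_diag_mem (hW : IsStable W) (hW0 : W ≠ ⊥) : ∃ g ≠ 0, ((g, g) : V) ∈ W := by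
  obtain ⟨p, hp, hp0⟩ := W.ne_bot_iff.mp hW0
  by_cases h1 : p.1 = 0
  · refine ⟨(piHat p).1, ?_, hW.mk_fst_fst_mem (hW p hp).2.1⟩
    have hpi : (piHat p).1 = (T 1 - T (-1)) * p.2 := by simp only [piHat, h1]; ring
    have hT : (T 1 - T (-1) : L) ≠ 0 := fun h => by simpa using congrArg (·.coeff 1) h
    exact hpi ▸ mul_ne_zero hT fun h2 => hp0 (Prod.ext h1 h2)
  · exact ⟨p.1, h1, hW.mk_fst_fst_mem hp⟩

lemma gamInv_diag_mem (hW : IsStable W) {g : L} (hg : ((g, g) : V) ∈ W) :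
    ((gamInv g, gamInv g) : V) ∈ W := by
  have h := hW.mk_fst_fst_mem (hW _ (hW _ hg).2.1).2.2
  rw [YhatGam_piHat_diag] at h
  exact (W.smul_mem_iff (inv_ne_zero u_ne_zero)).mp h

lemma exists_T_diag_mem (hW : IsStable W) (hW0 : W ≠ ⊥) : ∃ m, ((T m, T m) : V) ∈ W := by
  obtain ⟨g, hg0, hg⟩ := hW.exists_diag_mem hW0
  exact exists_T_mem_of_diagonal_invariant (A := gamInv) (zpow_u_sq_injective.comp neg_injective)
    coeff_gamInv (P := W.comap (LinearMap.id.prod LinearMap.id)) (fun f hf => hW.gamInv_diag_mem hf)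
    hg hg0

lemma mk_zero_mem_of_smul_mk_mem (hW : IsStable W) {g : L} {a b : K} (hab : a ≠ b)
    (hg : ((g, g) : V) ∈ W) (h : ((a • g, b • g) : V) ∈ W) : ((g, 0) : V) ∈ W := by
  have hsnd : ((0, g) : V) ∈ W := by
    have := (hW _ h).1
    rw [That, ← sub_smul, ← Prod.smul_zero_mk] at this
    exact (W.smul_mem_iff (sub_ne_zero.mpr hab)).mp this
  simpa using W.sub_mem hg hsnd

lemma T_diag_mem_add_one (hW : IsStable W) {m : ℤ} (h : ((T m, T m) : V) ∈ W) :
    ((T (m + 1), T (m + 1)) : V) ∈ W := by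
  have hfst : ((T (m + 1), 0) : V) ∈ W := by
    have := (hW _ h).2.1
    rwa [piHat_diag, ← T_add] at this
  have hsnd : ((0, T (m + 1)) : V) ∈ W := by
    have := (hW _ h).2.2
    rw [YhatGam_diag, gam_T, smul_mul_assoc, ← T_add, smul_smul, ← Prod.smul_zero_mk] at this
    exact (W.smul_mem_iff (mul_ne_zero u_ne_zero (zpow_ne_zero _ (pow_ne_zero 2 u_ne_zero)))).mp
      this
  simpa using W.add_mem hfst hsnd

lemma T_diag_mem_sub_one (hW : IsStable W) {m : ℤ} (hm : m ≠ 0) (h : ((T m, T m) : V) ∈ W) :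
    ((T (m - 1), T (m - 1)) : V) ∈ W := by
  have hY := (hW _ (hW _ h).2.1).2.2
  rw [YhatGam_piHat_diag, gamInv_T, gam_T, W.smul_mem_iff (inv_ne_zero u_ne_zero)] at hY
  have hfst := hW.mk_zero_mem_of_smul_mk_mem (zpow_u_sq_injective.ne (neg_ne_self.mpr hm)) h hY
  have := (hW _ hfst).2.1
  rwa [piHat_mk_zero, ← T_add, ← sub_eq_add_neg] at this

lemma T_diag_mem_of_nonneg (hW : IsStable W) {m n : ℤ} (h : ((T m, T m) : V) ∈ W) (hn : 0 ≤ n) :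
    ((T n, T n) : V) ∈ W := by
  rcases le_total m n with hmn | hnm
  · clear hn
    induction n, hmn using Int.leInduction with
    | base => exact h
    | succ k _ ih => exact hW.T_diag_mem_add_one ih
  · induction n, hnm using Int.leInductionDown with
    | base => exact h
    | pred k _ ih => exact hW.T_diag_mem_sub_one (by omega) (ih (by omega))

lemma Xspin_le (hW : IsStable W) (hW0 : W ≠ ⊥) : Xspin ≤ W := by
  obtain ⟨m, hm⟩ := hW.exists_T_diag_mem hW0
  have hfst : ∀ k : ℕ, 1 ≤ k → ((T (k : ℤ), 0) : V) ∈ W := fun k hk => by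
    have := (hW _ (hW.T_diag_mem_of_nonneg hm (n := k - 1) (by omega))).2.1
    rwa [piHat_diag, ← T_add, sub_add_cancel] at this
  refine Submodule.span_le.mpr ?_
  rintro _ ((rfl | ⟨k, hk, rfl⟩) | ⟨k, hk, rfl⟩)
  · exact T_zero (R := K) ▸ hW.T_diag_mem_of_nonneg hm le_rfl
  · exact hfst k hk
  · simpa [That] using (hW _ (hfst k hk)).1

end IsStable

/-- The spinor-polynomial representation: `𝒳_spin` is invariant under `T̂`, `π̂` and
the Gaussian-conjugated spinor Dunkl operator `Ŷ_γ`, and is irreducible under them: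
every nonzero `K`-subspace `W ⊆ 𝒳_spin` invariant under the three operators equals
`𝒳_spin`. -/
theorem spinor_polynomial_representation :
    (∀ p ∈ Xspin, That p ∈ Xspin ∧ piHat p ∈ Xspin ∧ YhatGam p ∈ Xspin) ∧
    (∀ W : Submodule K V, W ≤ Xspin → W ≠ ⊥ →
      (∀ p ∈ W, That p ∈ W ∧ piHat p ∈ W ∧ YhatGam p ∈ W) → W = Xspin) :=
  ⟨fun _ hp => ⟨That_mem_Xspin hp, piHat_mem_Xspin hp, YhatGam_mem_Xspin hp⟩,
    fun _ hle hW0 hW => le_antisymm hle (IsStable.Xspin_le hW hW0)⟩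
end
end
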